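/- arXiv:2509.19007 — 3 statements merged into one kernel-verified Lean document; each statement's English description precedes it below -/
import Mathlib

section
/- The impact function satisfies the lower bound h(v_1,...,v_p) ≥ ∑_{i=1}^p w_i v_i. -/
/-- Lower bound of the impact function: `h(v) ≥ ∑ i, w i * v i`. -/
theorem impact_function_ge_weighted_sum (p : ℕ) (hp : 1 ≤ p) (c : ℝ)
    (hc : c ∈ Set.Ioo (0:ℝ) 1)
    (v w : Fin p → ℝ) (hv : ∀ i, v i ∈ Set.Icc (0:ℝ) 1)
    (hw : ∀ i, 0 ≤ w i) (hsum : ∑ i, w i = 1) :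
    ∑ i, w i * v i ≤ (1 - ∏ i, (1 - v i * c) ^ (w i)) / c := by
  obtain ⟨hc0, hc1⟩ := hc
  have key : ∏ i, (1 - v i * c) ^ (w i) ≤ ∑ i, w i * (1 - v i * c) :=
    Real.geom_mean_le_arith_mean_weighted Finset.univ w (fun i => 1 - v i * c)
      (fun i _ => hw i) hsum (fun i _ => by have := (hv i).1; have := (hv i).2; nlinarith)
  have hsum2 : ∑ i, w i * (1 - v i * c) = 1 - c * ∑ i, w i * v i := by
    simp only [mul_sub, mul_one, Finset.sum_sub_distrib, hsum, Finset.mul_sum]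
    
    congr 1; apply Finset.sum_congr rfl; intro i _; ring
  rw [le_div_iff₀ hc0]
  nlinarith [key, hsum2]
end

section
/- Let Y be a random variable with distribution function F_Y and let X be another random variable. If for every real λ, lim_{v→∞} P(Y > λ | X > v) = 1, then lim_{v→∞} E[F_Y(Y) | X > v] = 1 (assuming P(X > v) > 0 for all v). -/
open MeasureTheory Filter ProbabilityTheory

/-!
`F` is the CDF of the law of `Y`, so it is monotone, takes values in `[0, 1]` and tends to `1`
at `+∞`. Hence `E[F(Y) | X > v] ≤ 1`, while `F(Y) ≥ F(λ)` on `{Y > λ}` gives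
`E[F(Y) | X > v] ≥ F(λ) · P(Y > λ | X > v) → F(λ)` for every `λ`; let `λ → ∞`.
-/

section

variable {Ω : Type*} [MeasurableSpace Ω] {μ : Measure Ω} [IsFiniteMeasure μ] {g : Ω → ℝ}
  {A B : Set Ω}

lemma setIntegral_div_measureReal_le_one (hg : ∀ ω ∈ B, ‖g ω‖ ≤ 1) :
    (∫ ω in B, g ω ∂μ) / μ.real B ≤ 1 := by
  refine div_le_one_of_le₀ ?_ measureReal_nonneg
  calc ∫ ω in B, g ω ∂μ ≤ ‖∫ ω in B, g ω ∂μ‖ := Real.le_norm_self _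
    _ ≤ 1 * μ.real B := norm_setIntegral_le_of_norm_le_const (measure_lt_top μ B) hg
    _ = μ.real B := one_mul _

lemma mul_measureReal_inter_le_setIntegral {c : ℝ} (hA : MeasurableSet A)
    (hg : IntegrableOn g B μ) (hg0 : ∀ ω, 0 ≤ g ω) (hcg : ∀ ω ∈ A, c ≤ g ω) :
    c * μ.real (A ∩ B) ≤ ∫ ω in B, g ω ∂μ := by
  have hind : A.indicator (fun _ ↦ c) ≤ g := fun ω ↦ by
    by_cases hω : ω ∈ A
    · simpa [hω] using hcg ω hω
    · simpa [hω] using hg0 ω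
  calc c * μ.real (A ∩ B) = ∫ ω in B, A.indicator (fun _ ↦ c) ω ∂μ := by
        rw [integral_indicator_const _ hA, measureReal_restrict_apply hA, smul_eq_mul, mul_comm]
    _ ≤ ∫ ω in B, g ω ∂μ :=
        integral_mono ((integrable_const c).indicator hA) hg hind

lemma mul_measureReal_inter_div_le_setIntegral_div {c : ℝ} (hA : MeasurableSet A)
    (hg : IntegrableOn g B μ) (hg0 : ∀ ω, 0 ≤ g ω) (hcg : ∀ ω ∈ A, c ≤ g ω) :
    c * (μ.real (A ∩ B) / μ.real B) ≤ (∫ ω in B, g ω ∂μ) / μ.real B := by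
  rw [← mul_div_assoc]
  exact div_le_div_of_nonneg_right (mul_measureReal_inter_le_setIntegral hA hg hg0 hcg)
    measureReal_nonneg

end

lemma cdf_map_eq_real {Ω : Type*} [MeasurableSpace Ω] {μ : Measure Ω} [IsProbabilityMeasure μ]
    {Y : Ω → ℝ} (hY : Measurable Y) (y : ℝ) :
    cdf (μ.map Y) y = μ.real {ω | Y ω ≤ y} := by
  have := Measure.isProbabilityMeasure_map (μ := μ) hY.aemeasurable
  rw [cdf_eq_real, map_measureReal_apply hY measurableSet_Iic]
  rfl

theorem cond_expectation_tendsto_one_general {Ω : Type*} [MeasurableSpace Ω]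
    (μ : Measure Ω) [IsProbabilityMeasure μ]
    (X Y : Ω → ℝ) (hY : Measurable Y)
    (F : ℝ → ℝ) (hF : ∀ y, F y = (μ {ω | Y ω ≤ y}).toReal)
    (hcond : ∀ lam : ℝ, Tendsto
      (fun v => (μ ({ω | lam < Y ω} ∩ {ω | v < X ω})).toReal / (μ {ω | v < X ω}).toReal)
      atTop (nhds 1)) :
    Tendsto
      (fun v => (∫ ω in {ω | v < X ω}, F (Y ω) ∂μ) / (μ {ω | v < X ω}).toReal)
      atTop (nhds 1) := by
  obtain rfl : F = cdf (μ.map Y) := funext fun y ↦ (hF y).trans (cdf_map_eq_real hY y).symm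
  have hFY_norm : ∀ ω, ‖cdf (μ.map Y) (Y ω)‖ ≤ 1 := fun ω ↦ by
    rw [Real.norm_of_nonneg (cdf_nonneg _ _)]
    exact cdf_le_one _ _
  have hFY_int : Integrable (fun ω ↦ cdf (μ.map Y) (Y ω)) μ :=
    .of_bound ((monotone_cdf _).measurable.comp hY).aestronglyMeasurable 1 (ae_of_all _ hFY_norm)
  refine tendsto_order.2 ⟨fun a ha ↦ ?_, fun a ha ↦ .of_forall fun v ↦
    (setIntegral_div_measureReal_le_one fun ω _ ↦ hFY_norm ω).trans_lt ha⟩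
  obtain ⟨lam, hlam⟩ := ((tendsto_cdf_atTop _).eventually (lt_mem_nhds ha)).exists
  have hlower := ((hcond lam).const_mul (cdf (μ.map Y) lam)).eventually
    (lt_mem_nhds (by rwa [mul_one]))
  filter_upwards [hlower] with v hv
  exact hv.trans_le <| mul_measureReal_inter_div_le_setIntegral_div
    (measurableSet_lt measurable_const hY) hFY_int.integrableOn (fun ω ↦ cdf_nonneg _ _)
    fun ω hω ↦ monotone_cdf _ hω.le

/-- If `P(Y > λ | X > v) → 1` as `v → ∞` for every `λ`, then
`E[F_Y(Y) | X > v] → 1` as `v → ∞`. -/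
theorem cond_expectation_tendsto_one {Ω : Type*} [MeasurableSpace Ω]
    (μ : Measure Ω) [IsProbabilityMeasure μ]
    (X Y : Ω → ℝ) (hX : Measurable X) (hY : Measurable Y)
    (F : ℝ → ℝ) (hF : ∀ y, F y = (μ {ω | Y ω ≤ y}).toReal)
    (hpos : ∀ v : ℝ, 0 < μ {ω | v < X ω})
    (happrox : ∀ ε > (0:ℝ), ∃ lam : ℝ, 1 - ε < F lam)
    (hcond : ∀ lam : ℝ, Tendsto
      (fun v => (μ ({ω | lam < Y ω} ∩ {ω | v < X ω})).toReal / (μ {ω | v < X ω}).toReal)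
      atTop (nhds 1)) :
    Tendsto
      (fun v => (∫ ω in {ω | v < X ω}, F (Y ω) ∂μ) / (μ {ω | v < X ω}).toReal)
      atTop (nhds 1) :=
  cond_expectation_tendsto_one_general μ X Y hY F hF hcond
end

section
/- Conversely, if lim_{v→∞} E[F_Y(Y) | X > v] = 1 and F_Y(λ) < 1 for some λ, then lim_{v→∞} P(Y > λ | X > v) = 1 for every such λ. -/
/-!
Under the conditional law `P(· | X > v)` the variable `1 - F_Y(Y)` is nonnegative with mean
`1 - E[F_Y(Y) | X > v] → 0`, and on `{Y ≤ λ}` it is at least `1 - F_Y(λ) > 0`. Markov's inequality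
therefore sends `P(Y ≤ λ | X > v)` to `0`.
-/

open MeasureTheory Filter ProbabilityTheory Topology

section

variable {Ω : Type*} [MeasurableSpace Ω]

lemma measureReal_le_one_sub_integral_div {ν : Measure Ω} [IsProbabilityMeasure ν] {f : Ω → ℝ}
    (hf : Integrable f ν) (hf_le : ∀ ω, f ω ≤ 1) {c : ℝ} (hc : c < 1) {t : Set Ω}
    (hft : ∀ ω ∈ t, f ω ≤ c) :
    ν.real t ≤ (1 - ∫ ω, f ω ∂ν) / (1 - c) := by
  have hmarkov := mul_meas_ge_le_integral_of_nonneg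
    (ae_of_all ν fun ω => sub_nonneg.2 (hf_le ω)) ((integrable_const 1).sub hf) (1 - c)
  rw [integral_sub (integrable_const 1) hf, integral_const, probReal_univ, one_smul] at hmarkov
  rw [le_div_iff₀ (sub_pos.2 hc), mul_comm]
  calc (1 - c) * ν.real t ≤ (1 - c) * ν.real {ω | 1 - c ≤ 1 - f ω} :=
        mul_le_mul_of_nonneg_left (measureReal_mono fun ω hω => sub_le_sub_left (hft ω hω) 1)
          (sub_pos.2 hc).le
    _ ≤ 1 - ∫ ω, f ω ∂ν := hmarkov

lemma tendsto_measureReal_one_of_tendsto_integral_one {ι : Type*} {l : Filter ι}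
    {ν : ι → Measure Ω} [∀ i, IsProbabilityMeasure (ν i)] {f : Ω → ℝ}
    (hf : ∀ i, Integrable f (ν i)) (hf_le : ∀ ω, f ω ≤ 1) {c : ℝ} (hc : c < 1) {s : Set Ω}
    (hs : MeasurableSet s) (hfs : ∀ ω ∉ s, f ω ≤ c)
    (hlim : Tendsto (fun i => ∫ ω, f ω ∂ν i) l (𝓝 1)) :
    Tendsto (fun i => (ν i).real s) l (𝓝 1) := by
  have hcompl : Tendsto (fun i => (ν i).real sᶜ) l (𝓝 0) := by
    have hbound : Tendsto (fun i => (1 - ∫ ω, f ω ∂ν i) / (1 - c)) l (𝓝 0) := by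
      simpa using ((tendsto_const_nhds (x := (1 : ℝ))).sub hlim).div_const (1 - c)
    exact tendsto_of_tendsto_of_tendsto_of_le_of_le tendsto_const_nhds hbound
      (fun i => measureReal_nonneg)
      (fun i => measureReal_le_one_sub_integral_div (hf i) hf_le hc hfs)
  simpa [probReal_compl_eq_one_sub hs] using (tendsto_const_nhds (x := (1 : ℝ))).sub hcompl

lemma monotone_measureReal_setOf_le (μ : Measure Ω) [IsFiniteMeasure μ] (Y : Ω → ℝ) :
    Monotone fun y => μ.real {ω | Y ω ≤ y} :=
  fun _ _ hab => measureReal_mono fun _ hω => le_trans hω hab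

lemma measureReal_cond_eq_div (μ : Measure Ω) (A : Set Ω) {B : Set Ω} (hB : MeasurableSet B) :
    (μ[|A]).real B = (μ (B ∩ A)).toReal / (μ A).toReal := by
  rw [measureReal_def, cond_apply' hB, ENNReal.toReal_mul, ENNReal.toReal_inv, Set.inter_comm,
    div_eq_inv_mul]

lemma integral_cond_eq_div (μ : Measure Ω) (A : Set Ω) (f : Ω → ℝ) :
    ∫ ω, f ω ∂μ[|A] = (∫ ω in A, f ω ∂μ) / (μ A).toReal := by
  rw [ProbabilityTheory.cond, integral_smul_measure, ENNReal.toReal_inv, smul_eq_mul,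
    inv_mul_eq_div]

end

theorem cond_prob_tendsto_one_general {Ω : Type*} [MeasurableSpace Ω]
    (μ : Measure Ω) [IsProbabilityMeasure μ]
    (X Y : Ω → ℝ) (hY : Measurable Y)
    (F : ℝ → ℝ) (hF : ∀ y, F y = (μ {ω | Y ω ≤ y}).toReal)
    (hpos : ∀ v : ℝ, 0 < μ {ω | v < X ω})
    (hcondE : Tendsto
      (fun v => (∫ ω in {ω | v < X ω}, F (Y ω) ∂μ) / (μ {ω | v < X ω}).toReal)
      atTop (nhds 1)) :
    ∀ lam : ℝ, F lam < 1 → Tendsto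
      (fun v => (μ ({ω | lam < Y ω} ∩ {ω | v < X ω})).toReal / (μ {ω | v < X ω}).toReal)
      atTop (nhds 1) := by
  intro lam hlam
  have : ∀ v : ℝ, IsProbabilityMeasure μ[|{ω | v < X ω}] :=
    fun v => cond_isProbabilityMeasure (hpos v).ne'
  have hF_eq : F = fun y => μ.real {ω | Y ω ≤ y} := funext hF
  have hF_mono : Monotone F := hF_eq ▸ monotone_measureReal_setOf_le μ Y
  have hF_mem : ∀ y, F y ∈ Set.Icc 0 1 := fun y => by simp [hF_eq, measureReal_le_one]
  have hFY_int (ν : Measure Ω) [IsFiniteMeasure ν] : Integrable (fun ω => F (Y ω)) ν :=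
    .of_mem_Icc 0 1 (hF_mono.measurable.comp hY).aemeasurable (ae_of_all _ (hF_mem <| Y ·))
  have hcond_lim : Tendsto (fun v => ∫ ω, F (Y ω) ∂μ[|{ω | v < X ω}]) atTop (𝓝 1) :=
    hcondE.congr fun v => (integral_cond_eq_div μ _ _).symm
  have hB : MeasurableSet {ω | lam < Y ω} := hY measurableSet_Ioi
  exact (tendsto_measureReal_one_of_tendsto_integral_one (fun v => hFY_int _)
    (fun ω => (hF_mem (Y ω)).2) hlam hB (fun ω hω => hF_mono (not_lt.1 hω)) hcond_lim).congr
    fun v => measureReal_cond_eq_div μ _ hB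

/-- Conversely, if `E[F_Y(Y) | X > v] → 1` as `v → ∞`, then for every `λ` with
`F_Y(λ) < 1` we have `P(Y > λ | X > v) → 1` as `v → ∞`. -/
theorem cond_prob_tendsto_one {Ω : Type*} [MeasurableSpace Ω]
    (μ : Measure Ω) [IsProbabilityMeasure μ]
    (X Y : Ω → ℝ) (hX : Measurable X) (hY : Measurable Y)
    (F : ℝ → ℝ) (hF : ∀ y, F y = (μ {ω | Y ω ≤ y}).toReal)
    (hpos : ∀ v : ℝ, 0 < μ {ω | v < X ω})
    (hcondE : Tendsto
      (fun v => (∫ ω in {ω | v < X ω}, F (Y ω) ∂μ) / (μ {ω | v < X ω}).toReal)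
      atTop (nhds 1)) :
    ∀ lam : ℝ, F lam < 1 → Tendsto
      (fun v => (μ ({ω | lam < Y ω} ∩ {ω | v < X ω})).toReal / (μ {ω | v < X ω}).toReal)
      atTop (nhds 1) :=
  cond_prob_tendsto_one_general μ X Y hY F hF hpos hcondE
end
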